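/- arXiv:0705.3443 — 5 statements merged into one kernel-verified Lean document; each statement's English description precedes it below -/
import Mathlib

section
/- For every x > 0 and μ > 0, the improper integral ∫_0^∞ cos(ξx)/(ξ+μ) dξ exists as the limit lim_{R→∞} ∫_0^R cos(ξx)/(ξ+μ) dξ, and equals ∫_0^∞ τ e^{−xτ}/(μ²+τ²) dτ. -/
open MeasureTheory Filter Set Real Topology

/-!
Write `1/(ξ+μ) = ∫_0^∞ e^{-(ξ+μ)t} dt` and exchange the integrals (Fubini; the integrand is
dominated by `|cos(ξx)| e^{-μt}`). The inner integral `∫_0^R cos(ξx) e^{-ξt} dξ` is elementary,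
is bounded by `2/x` uniformly in `R` and `t ≥ 0`, and tends to `t/(t²+x²)`, so dominated
convergence gives the limit `∫_0^∞ t e^{-μt}/(x²+t²) dt`. The substitution `τ = b u` shows that
`∫_0^∞ τ e^{-aτ}/(b²+τ²) dτ` depends only on `ab`, which lets `x` and `μ` trade places.
-/

lemma integral_exp_neg_mul_Ioi {c : ℝ} (hc : 0 < c) : ∫ t in Ioi (0:ℝ), exp (-c * t) = c⁻¹ := by
  simpa using integral_exp_mul_Ioi (neg_lt_zero.2 hc) 0

lemma setIntegral_div_add_eq_integral_Ioi_exp_mul {f : ℝ → ℝ} {S : Set ℝ} (hS : MeasurableSet S)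
    (hS0 : S ⊆ Ici 0) (hf : IntegrableOn f S) {μ : ℝ} (hμ : 0 < μ) :
    ∫ ξ in S, f ξ / (ξ + μ) = ∫ t in Ioi 0, exp (-μ * t) * ∫ ξ in S, f ξ * exp (-ξ * t) := by
  set F : ℝ × ℝ → ℝ := fun p => f p.1 * exp (-p.1 * p.2) * exp (-μ * p.2)
  have hF : Integrable F ((volume.restrict S).prod (volume.restrict (Ioi 0))) := by
    refine Integrable.mono' (hf.norm.mul_prod (exp_neg_integrableOn_Ioi 0 hμ)) ?_ ?_
    · exact (hf.aestronglyMeasurable.comp_fst.mul (by fun_prop : Continuous fun p : ℝ × ℝ =>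
        exp (-p.1 * p.2)).aestronglyMeasurable).mul (by fun_prop : Continuous fun p : ℝ × ℝ =>
        exp (-μ * p.2)).aestronglyMeasurable
    · rw [Measure.prod_restrict]
      filter_upwards [ae_restrict_mem (hS.prod measurableSet_Ioi)] with p ⟨hξ, ht⟩
      have hexp : exp (-p.1 * p.2) ≤ 1 :=
        exp_le_one_iff.2 (by nlinarith [mem_Ici.1 (hS0 hξ), mem_Ioi.1 ht])
      simp only [F, norm_mul, norm_of_nonneg (exp_pos _).le]
      gcongr
      exact mul_le_of_le_one_right (norm_nonneg _) hexp
  calc ∫ ξ in S, f ξ / (ξ + μ) = ∫ ξ in S, ∫ t in Ioi 0, F (ξ, t) := by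
        refine setIntegral_congr_fun hS fun ξ hξ => ?_
        have hξμ : 0 < ξ + μ := by linarith [mem_Ici.1 (hS0 hξ)]
        rw [div_eq_mul_inv, ← integral_exp_neg_mul_Ioi hξμ, ← integral_const_mul]
        congr 1 with t
        simp only [F, mul_assoc, ← exp_add]
        ring_nf
    _ = ∫ t in Ioi 0, ∫ ξ in S, F (ξ, t) := integral_integral_swap hF
    _ = ∫ t in Ioi 0, exp (-μ * t) * ∫ ξ in S, f ξ * exp (-ξ * t) := by
        congr 1 with t
        rw [← integral_const_mul]
        congr 1 with ξ
        simp only [F]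
        ring

lemma integral_cos_mul_exp_neg_mul {x : ℝ} (hx : x ≠ 0) (s R : ℝ) :
    ∫ ξ in (0:ℝ)..R, cos (ξ * x) * exp (-ξ * s) =
      (s + exp (-R * s) * (x * sin (R * x) - s * cos (R * x))) / (s ^ 2 + x ^ 2) := by
  have hsx : s ^ 2 + x ^ 2 ≠ 0 := by positivity
  have hderiv : ∀ ξ, HasDerivAt
      (fun ξ => exp (-ξ * s) * (x * sin (ξ * x) - s * cos (ξ * x)) / (s ^ 2 + x ^ 2))
      (cos (ξ * x) * exp (-ξ * s)) ξ := by
    intro ξ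
    have hlin := hasDerivAt_mul_const (x := ξ) x
    refine ((((hasDerivAt_neg ξ).mul_const s).exp.fun_mul ((hlin.sin.const_mul x).fun_sub
      (hlin.cos.const_mul s))).div_const (s ^ 2 + x ^ 2)).congr_deriv ?_
    field_simp
    ring
  rw [intervalIntegral.integral_eq_sub_of_hasDerivAt (fun ξ _ => hderiv ξ)
    ((by fun_prop : Continuous _).intervalIntegrable _ _)]
  field_simp
  simp only [mul_zero, neg_zero, exp_zero, sin_zero, cos_zero, mul_one, zero_sub, mul_neg, one_mul,
    sub_neg_eq_add]
  ring

lemma abs_mul_sin_sub_mul_cos_le (a b θ : ℝ) : |a * sin θ - b * cos θ| ≤ |a| + |b| :=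
  calc |a * sin θ - b * cos θ| ≤ |a| * |sin θ| + |b| * |cos θ| := by
        simpa only [abs_mul] using abs_sub (a * sin θ) (b * cos θ)
    _ ≤ |a| * 1 + |b| * 1 := by gcongr <;> first | exact abs_sin_le_one θ | exact abs_cos_le_one θ
    _ = |a| + |b| := by ring

lemma abs_integral_cos_mul_exp_neg_mul_le {x s R : ℝ} (hx : 0 < x) (hs : 0 ≤ s) (hR : 0 ≤ R) :
    |∫ ξ in (0:ℝ)..R, cos (ξ * x) * exp (-ξ * s)| ≤ 2 / x := by
  rw [integral_cos_mul_exp_neg_mul hx.ne', abs_div, abs_of_pos (by positivity : 0 < s ^ 2 + x ^ 2),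
    div_le_div_iff₀ (by positivity) hx]
  have hexp : exp (-R * s) ≤ 1 := exp_le_one_iff.2 (by nlinarith)
  have htrig := abs_mul_sin_sub_mul_cos_le x s (R * x)
  rw [abs_of_pos hx, abs_of_nonneg hs] at htrig
  have hnum : |s + exp (-R * s) * (x * sin (R * x) - s * cos (R * x))| ≤ 2 * s + x :=
    calc _ ≤ |s| + exp (-R * s) * |x * sin (R * x) - s * cos (R * x)| := by
          simpa only [abs_mul, abs_of_pos (exp_pos _)] using
            abs_add_le s (exp (-R * s) * (x * sin (R * x) - s * cos (R * x)))
      _ ≤ s + 1 * (x + s) := by rw [abs_of_nonneg hs]; gcongr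
      _ = 2 * s + x := by ring
  nlinarith [sq_nonneg (s - x), sq_nonneg s]

lemma tendsto_integral_cos_mul_exp_neg_mul {x s : ℝ} (hx : x ≠ 0) (hs : 0 < s) :
    Tendsto (fun R => ∫ ξ in (0:ℝ)..R, cos (ξ * x) * exp (-ξ * s)) atTop
      (𝓝 (s / (s ^ 2 + x ^ 2))) := by
  simp_rw [integral_cos_mul_exp_neg_mul hx]
  have hexp : Tendsto (fun R => exp (-R * s)) atTop (𝓝 0) := by
    have := tendsto_exp_neg_atTop_nhds_zero.comp (tendsto_id.atTop_mul_const hs)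
    simpa [Function.comp_def, neg_mul] using this
  have hdecay : Tendsto (fun R => exp (-R * s) * (x * sin (R * x) - s * cos (R * x))) atTop
      (𝓝 0) := by
    refine squeeze_zero_norm (a := fun R => exp (-R * s) * (|x| + |s|)) (fun R => ?_)
      (by simpa using hexp.mul_const (|x| + |s|))
    rw [norm_mul, norm_of_nonneg (exp_pos _).le, norm_eq_abs]
    exact mul_le_mul_of_nonneg_left (abs_mul_sin_sub_mul_cos_le x s (R * x)) (exp_pos _).le
  simpa using (hdecay.const_add s).div_const (s ^ 2 + x ^ 2)

lemma tendsto_integral_Ioi_exp_mul_integral_cos_mul_exp_neg_mul {x μ : ℝ} (hx : 0 < x)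
    (hμ : 0 < μ) :
    Tendsto (fun R => ∫ t in Ioi 0, exp (-μ * t) * ∫ ξ in (0:ℝ)..R, cos (ξ * x) * exp (-ξ * t))
      atTop (𝓝 (∫ t in Ioi 0, t * exp (-μ * t) / (x ^ 2 + t ^ 2))) := by
  refine tendsto_integral_filter_of_dominated_convergence (fun t => 2 / x * exp (-μ * t))
    (Eventually.of_forall fun R => (by fun_prop : Continuous _).aestronglyMeasurable) ?_
    ((exp_neg_integrableOn_Ioi 0 hμ).const_mul _) ?_
  · filter_upwards [eventually_ge_atTop 0] with R hR
    filter_upwards [ae_restrict_mem measurableSet_Ioi] with t ht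
    rw [norm_mul, norm_of_nonneg (exp_pos _).le, norm_eq_abs, mul_comm]
    exact mul_le_mul_of_nonneg_right (abs_integral_cos_mul_exp_neg_mul_le hx (le_of_lt ht) hR)
      (exp_pos _).le
  · filter_upwards [ae_restrict_mem measurableSet_Ioi] with t ht
    convert (tendsto_integral_cos_mul_exp_neg_mul hx.ne' ht).const_mul (exp (-μ * t)) using 2
    ring

lemma integral_Ioi_mul_exp_neg_div_sq_add_sq_eq {a b : ℝ} (hb : 0 < b) :
    ∫ τ in Ioi (0:ℝ), τ * exp (-a * τ) / (b ^ 2 + τ ^ 2) =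
      ∫ u in Ioi (0:ℝ), u * exp (-(a * b) * u) / (1 + u ^ 2) := by
  have h := integral_comp_mul_left_Ioi (fun τ => τ * exp (-a * τ) / (b ^ 2 + τ ^ 2)) 0 hb
  calc ∫ τ in Ioi (0:ℝ), τ * exp (-a * τ) / (b ^ 2 + τ ^ 2)
      = b * ∫ u in Ioi (0:ℝ), b * u * exp (-a * (b * u)) / (b ^ 2 + (b * u) ^ 2) := by
        rw [h, smul_eq_mul, mul_inv_cancel_left₀ hb.ne', mul_zero]
    _ = b * ∫ u in Ioi (0:ℝ), b⁻¹ * (u * exp (-(a * b) * u) / (1 + u ^ 2)) := by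
        congr 2 with u
        field_simp
    _ = _ := by rw [integral_const_mul, mul_inv_cancel_left₀ hb.ne']

lemma integral_Ioi_mul_exp_neg_div_sq_add_sq_comm {a b : ℝ} (ha : 0 < a) (hb : 0 < b) :
    ∫ τ in Ioi (0:ℝ), τ * exp (-a * τ) / (b ^ 2 + τ ^ 2) =
      ∫ τ in Ioi (0:ℝ), τ * exp (-b * τ) / (a ^ 2 + τ ^ 2) := by
  rw [integral_Ioi_mul_exp_neg_div_sq_add_sq_eq hb, integral_Ioi_mul_exp_neg_div_sq_add_sq_eq ha,
    mul_comm]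

/-- For every `x > 0` and `μ > 0`, the improper integral
`∫_0^∞ cos(ξx)/(ξ+μ) dξ` exists as the limit of `∫_0^R` as `R → ∞`,
and equals the (absolutely convergent) integral `∫_0^∞ τ e^{−xτ}/(μ²+τ²) dτ`. -/
theorem cos_integral_tendsto (x μ : ℝ) (hx : 0 < x) (hμ : 0 < μ) :
    Tendsto (fun R : ℝ => ∫ ξ in (0:ℝ)..R, Real.cos (ξ * x) / (ξ + μ)) atTop
      (nhds (∫ τ in Ioi (0:ℝ), τ * Real.exp (-x * τ) / (μ ^ 2 + τ ^ 2))) := by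
  rw [integral_Ioi_mul_exp_neg_div_sq_add_sq_comm hx hμ]
  refine (tendsto_integral_Ioi_exp_mul_integral_cos_mul_exp_neg_mul hx hμ).congr' ?_
  filter_upwards [eventually_ge_atTop 0] with R hR
  simp_rw [intervalIntegral.integral_of_le hR]
  exact (setIntegral_div_add_eq_integral_Ioi_exp_mul measurableSet_Ioc (fun ξ hξ => hξ.1.le)
    (by fun_prop : Continuous fun ξ => cos (ξ * x)).integrableOn_Ioc hμ).symm
end

section
/- For every x > 0 and μ > 0, ∫_0^∞ τ e^{−xτ}/(μ²+τ²) dτ = ∫_0^∞ s e^{−μs}/(s²+x²) ds. -/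
/-!
Both sides are the same absolutely convergent double integral: the Laplace transform of `sin`
gives `τ / (μ² + τ²) = ∫_0^∞ e^{-μs} sin(τs) ds`, so the left side is
`∫∫ e^{-xτ - μs} sin(τs) ds dτ`, and the right side is the same integral with the roles of
`(x, τ)` and `(μ, s)` exchanged. Fubini finishes the proof.
-/

open MeasureTheory Set Real

theorem integral_exp_neg_mul_mul_sin_Ioi {a : ℝ} (ha : 0 < a) (b : ℝ) :
    ∫ t in Ioi (0:ℝ), exp (-a * t) * sin (b * t) = b / (a ^ 2 + b ^ 2) := by
  set c : ℂ := -a + b * Complex.I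
  have hc : c.re < 0 := by simpa [c] using ha
  have h_im (t : ℝ) : exp (-a * t) * sin (b * t) = (Complex.exp (c * t)).im := by
    rw [Complex.exp_im]; simp [c]
  have h_normSq : Complex.normSq c = a ^ 2 + b ^ 2 := by
    simp [c, Complex.normSq_apply]; ring
  simp_rw [h_im, ← RCLike.im_to_complex]
  rw [integral_im (integrableOn_exp_mul_complex_Ioi hc 0), integral_exp_mul_complex_Ioi hc 0]
  simp [div_eq_mul_inv, Complex.inv_im, h_normSq, c]

theorem integrable_exp_mul_exp_mul_sin_prod {a b : ℝ} (ha : 0 < a) (hb : 0 < b) :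
    Integrable (fun p : ℝ × ℝ => exp (-a * p.1) * exp (-b * p.2) * sin (p.1 * p.2))
      ((volume.restrict (Ioi 0)).prod (volume.restrict (Ioi 0))) := by
  refine ((exp_neg_integrableOn_Ioi 0 ha).mul_prod (exp_neg_integrableOn_Ioi 0 hb)).mono'
    (by fun_prop) (Filter.Eventually.of_forall fun p => ?_)
  rw [norm_mul, Real.norm_eq_abs, abs_of_pos (by positivity)]
  exact mul_le_of_le_one_right (by positivity) (by simpa using abs_sin_le_one _)

theorem integral_mul_exp_div_sq_add_sq_eq_integral_prod {a b : ℝ} (ha : 0 < a) (hb : 0 < b) :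
    ∫ τ in Ioi (0:ℝ), τ * exp (-a * τ) / (b ^ 2 + τ ^ 2)
      = ∫ p, exp (-a * p.1) * exp (-b * p.2) * sin (p.1 * p.2)
          ∂((volume.restrict (Ioi 0)).prod (volume.restrict (Ioi 0))) := by
  rw [integral_prod _ (integrable_exp_mul_exp_mul_sin_prod ha hb)]
  refine integral_congr_ae (Filter.Eventually.of_forall fun τ => ?_)
  simp_rw [mul_assoc, integral_const_mul, integral_exp_neg_mul_mul_sin_Ioi hb]
  field_simp

/-- For every `x > 0` and `μ > 0`,
`∫_0^∞ τ e^{−xτ}/(μ²+τ²) dτ = ∫_0^∞ s e^{−μs}/(s²+x²) ds`. -/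
theorem kernel_symmetry (x μ : ℝ) (hx : 0 < x) (hμ : 0 < μ) :
    ∫ τ in Ioi (0:ℝ), τ * Real.exp (-x * τ) / (μ ^ 2 + τ ^ 2)
      = ∫ s in Ioi (0:ℝ), s * Real.exp (-μ * s) / (s ^ 2 + x ^ 2) := by
  simp_rw [add_comm (_ ^ 2) (x ^ 2)]
  rw [integral_mul_exp_div_sq_add_sq_eq_integral_prod hx hμ,
    integral_mul_exp_div_sq_add_sq_eq_integral_prod hμ hx, ← integral_prod_swap]
  simp only [Prod.fst_swap, Prod.snd_swap, mul_comm]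
end

section
/- For μ > 0, define K_μ : ℝ \ {0} → ℝ by K_μ(x) = √(2/π) ∫_0^∞ τ e^{−|x|τ}/(μ²+τ²) dτ. Then K_μ ∈ L¹(ℝ) ∩ L²(ℝ) and its Fourier transform satisfies K̂_μ(ξ) = 1/(|ξ|+μ) for all ξ ∈ ℝ. -/
open MeasureTheory Set

/-- The kernel `K_μ(x) = √(2/π) ∫_0^∞ τ e^{−|x|τ}/(μ²+τ²) dτ`. -/
noncomputable def Kmu (μ x : ℝ) : ℝ :=
  Real.sqrt (2 / Real.pi) * ∫ τ in Ioi (0:ℝ), τ * Real.exp (-|x| * τ) / (μ ^ 2 + τ ^ 2)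

/-- The Fourier transform with the convention
`ĝ(ξ) = (1/√(2π)) ∫_ℝ g(x) e^{−iξx} dx`. -/
noncomputable def fourierTr (g : ℝ → ℂ) (ξ : ℝ) : ℂ :=
  (Real.sqrt (2 * Real.pi) : ℂ)⁻¹ * ∫ x : ℝ, g x * Complex.exp (-(ξ * x) * Complex.I)

/-!
`K_μ` is a superposition `K_μ(x) = √(2/π) ∫_0^∞ g(τ) τ e^{-τ|x|} dτ` with `g(τ) = (μ² + τ²)⁻¹`
integrable on `(0, ∞)`. Each profile `τ e^{-τ|x|}` has integral `2` and Fourier integral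
`2τ² / (τ² + ξ²)`, so Tonelli gives `K_μ ∈ L¹` and Fubini reduces `K̂_μ(ξ)` to
`(2/π) ∫_0^∞ τ² / ((μ² + τ²)(ξ² + τ²)) dτ = 1 / (μ + |ξ|)`, computed with arctangent
antiderivatives. For `L²`, the bound `e^{-s} ≤ s^{-a}` (`0 ≤ a ≤ 1`) gives
`K_μ(x) = O(|x|^{-1/4})` near `0` and `K_μ(x) = O(|x|^{-1})` at infinity.
-/

open Real Filter Topology

lemma Function.Even.integrable_of_integrableOn_Ioi {E : Type*} [NormedAddCommGroup E] {f : ℝ → E}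
    (hf : Function.Even f) (h : IntegrableOn f (Ioi 0)) : Integrable f := by
  have hIio : IntegrableOn f (Iio 0) := by
    have := (neg_zero (G := ℝ) ▸ h).comp_neg_Iio
    rwa [show (fun x => f (-x)) = f from funext hf] at this
  rw [← integrableOn_univ, ← Iic_union_Ioi (a := (0:ℝ))]
  exact ((integrableOn_Iic_iff_integrableOn_Iio).mpr hIio).union h

lemma exp_neg_le_rpow_neg {s a : ℝ} (hs : 0 < s) (ha0 : 0 ≤ a) (ha1 : a ≤ 1) :
    Real.exp (-s) ≤ s ^ (-a) := by
  rcases le_or_gt s 1 with hs1 | hs1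
  · calc Real.exp (-s) ≤ 1 := Real.exp_le_one_iff.mpr (by linarith)
      _ ≤ s ^ (-a) := Real.one_le_rpow_of_pos_of_le_one_of_nonpos hs hs1 (by linarith)
  · calc Real.exp (-s) ≤ s⁻¹ := by
          rw [Real.exp_neg]
          exact inv_anti₀ hs (by linarith [Real.add_one_le_exp s])
      _ = s ^ (-1 : ℝ) := (Real.rpow_neg_one s).symm
      _ ≤ s ^ (-a) := Real.rpow_le_rpow_of_exponent_le hs1.le (by linarith)

lemma integrableOn_rpow_div_sq_add {μ s : ℝ} (hμ : μ ≠ 0) (hs0 : 0 ≤ s) (hs1 : s < 1) :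
    IntegrableOn (fun τ => τ ^ s / (μ ^ 2 + τ ^ 2)) (Ioi 0) := by
  have hmeas : Measurable fun τ : ℝ => τ ^ s / (μ ^ 2 + τ ^ 2) := by fun_prop
  rw [← Ioc_union_Ioi_eq_Ioi zero_le_one]
  refine IntegrableOn.union ?_ ?_
  · refine (integrableOn_const (C := (μ ^ 2)⁻¹) measure_Ioc_lt_top.ne).mono'
      hmeas.aestronglyMeasurable ?_
    filter_upwards [ae_restrict_mem measurableSet_Ioc] with τ ⟨hτ0, hτ1⟩
    rw [Real.norm_of_nonneg (by positivity), ← one_div]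
    exact div_le_div₀ zero_le_one (Real.rpow_le_one hτ0.le hτ1 hs0) (by positivity) (by nlinarith)
  · refine (integrableOn_Ioi_rpow_of_lt (by linarith : s - 2 < -1) zero_lt_one).mono'
      hmeas.aestronglyMeasurable ?_
    filter_upwards [ae_restrict_mem measurableSet_Ioi] with τ (hτ : 1 < τ)
    have hτ0 : 0 < τ := by linarith
    rw [Real.norm_of_nonneg (by positivity), Real.rpow_sub hτ0, Real.rpow_two]
    exact div_le_div_of_nonneg_left (by positivity) (by positivity) (by nlinarith)

section ExpAbs

open Complex

variable {t : ℝ} (ξ : ℝ)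

lemma exp_neg_abs_mul_cexp_eqOn_Ioi :
    EqOn (fun x : ℝ => (Real.exp (-|x| * t) : ℂ) * cexp (-(ξ * x) * I))
      (fun x : ℝ => cexp ((-t - ξ * I) * x)) (Ioi 0) := by
  intro x hx
  simp only [abs_of_pos (show (0:ℝ) < x from hx), ofReal_exp, ← Complex.exp_add]
  push_cast
  ring_nf

lemma exp_neg_abs_mul_cexp_eqOn_Iic :
    EqOn (fun x : ℝ => (Real.exp (-|x| * t) : ℂ) * cexp (-(ξ * x) * I))
      (fun x : ℝ => cexp ((t - ξ * I) * x)) (Iic 0) := by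
  intro x hx
  simp only [abs_of_nonpos (show x ≤ 0 from hx), ofReal_exp, ← Complex.exp_add]
  push_cast
  ring_nf

lemma integrable_exp_neg_abs_mul_cexp (ht : 0 < t) :
    Integrable (fun x : ℝ => (Real.exp (-|x| * t) : ℂ) * cexp (-(ξ * x) * I)) := by
  rw [← integrableOn_univ, ← Iic_union_Ioi (a := (0:ℝ))]
  exact ((integrableOn_exp_mul_complex_Iic (by simpa using ht) 0).congr_fun
      (exp_neg_abs_mul_cexp_eqOn_Iic ξ).symm measurableSet_Iic).union
    ((integrableOn_exp_mul_complex_Ioi (by simpa using ht) 0).congr_fun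
      (exp_neg_abs_mul_cexp_eqOn_Ioi ξ).symm measurableSet_Ioi)

lemma integral_exp_neg_abs_mul_cexp (ht : 0 < t) :
    ∫ x : ℝ, (Real.exp (-|x| * t) : ℂ) * cexp (-(ξ * x) * I) = 2 * t / (t ^ 2 + ξ ^ 2) := by
  have hint := integrable_exp_neg_abs_mul_cexp ξ ht
  have hplus : (t : ℂ) + ξ * I ≠ 0 := fun h => by simpa [ht.ne'] using congrArg re h
  have hminus : (t : ℂ) - ξ * I ≠ 0 := fun h => by simpa [ht.ne'] using congrArg re h
  have hneg : -(t : ℂ) - ξ * I = -(t + ξ * I) := by ring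
  rw [← intervalIntegral.integral_Iic_add_Ioi hint.integrableOn hint.integrableOn,
    setIntegral_congr_fun measurableSet_Iic (exp_neg_abs_mul_cexp_eqOn_Iic ξ),
    setIntegral_congr_fun measurableSet_Ioi (exp_neg_abs_mul_cexp_eqOn_Ioi ξ),
    integral_exp_mul_complex_Iic (by simpa using ht),
    integral_exp_mul_complex_Ioi (by simpa using ht)]
  have hsq : (t : ℂ) ^ 2 + ξ ^ 2 = (t + ξ * I) * (t - ξ * I) := by
    linear_combination (ξ : ℂ) ^ 2 * I_sq
  simp only [ofReal_zero, mul_zero, Complex.exp_zero]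
  rw [hsq, hneg]
  field_simp
  ring

lemma integrable_exp_neg_abs_mul (ht : 0 < t) :
    Integrable (fun x : ℝ => Real.exp (-|x| * t)) := by
  have := integrable_exp_neg_abs_mul_cexp 0 ht
  simp only [ofReal_zero, zero_mul, neg_zero, Complex.exp_zero, mul_one] at this
  simpa only [RCLike.re_to_complex, ofReal_re] using this.re

lemma integral_exp_neg_abs_mul (ht : 0 < t) : ∫ x : ℝ, Real.exp (-|x| * t) = 2 / t :=
  calc ∫ x : ℝ, Real.exp (-|x| * t) = ∫ x : ℝ, Real.exp (-t * |x|) := by simp_rw [neg_mul, mul_comm]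
    _ = 2 * ∫ x in Ioi 0, Real.exp (-t * x) := integral_comp_abs (f := fun x => Real.exp (-t * x))
    _ = 2 / t := by
      rw [integral_exp_mul_Ioi (neg_neg_of_pos ht)]
      field_simp
      simp

end ExpAbs

noncomputable def expAbsMixture (g : ℝ → ℝ) (x : ℝ) : ℝ :=
  ∫ τ in Ioi 0, g τ * (τ * Real.exp (-|x| * τ))

section ExpAbsMixture

open Complex

variable {g : ℝ → ℝ}

lemma integrable_expAbsMixture_integrand (hg : IntegrableOn g (Ioi 0)) :
    Integrable (fun p : ℝ × ℝ => g p.2 * (p.2 * Real.exp (-|p.1| * p.2)))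
      (volume.prod (volume.restrict (Ioi 0))) := by
  have hmeas : AEStronglyMeasurable (fun p : ℝ × ℝ => g p.2 * (p.2 * Real.exp (-|p.1| * p.2)))
      (volume.prod (volume.restrict (Ioi 0))) :=
    hg.aestronglyMeasurable.comp_snd.mul (by fun_prop : Continuous _).aestronglyMeasurable
  refine (integrable_prod_iff' hmeas).mpr ⟨?_, ?_⟩
  · filter_upwards [ae_restrict_mem measurableSet_Ioi] with τ hτ
    exact ((integrable_exp_neg_abs_mul hτ).const_mul τ).const_mul (g τ)
  · refine (hg.norm.const_mul 2).congr ?_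
    filter_upwards [ae_restrict_mem measurableSet_Ioi] with τ (hτ : 0 < τ)
    simp_rw [norm_mul, Real.norm_of_nonneg hτ.le, Real.norm_of_nonneg (Real.exp_nonneg _)]
    rw [integral_const_mul, integral_const_mul, integral_exp_neg_abs_mul hτ]
    field_simp

lemma integrable_expAbsMixture (hg : IntegrableOn g (Ioi 0)) : Integrable (expAbsMixture g) :=
  (integrable_expAbsMixture_integrand hg).integral_prod_left

lemma integral_expAbsMixture_mul_cexp (hg : IntegrableOn g (Ioi 0)) (ξ : ℝ) :
    ∫ x, (expAbsMixture g x : ℂ) * cexp (-(ξ * x) * I)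
      = ((∫ τ in Ioi 0, g τ * (2 * τ ^ 2 / (τ ^ 2 + ξ ^ 2)) : ℝ) : ℂ) := by
  set e : ℝ → ℂ := fun x => cexp (-(ξ * x) * I)
  have he : ∀ x, ‖e x‖ = 1 := fun x => by simp [e, Complex.norm_exp]
  have hFe : Integrable
      (Function.uncurry fun x τ => ((g τ * (τ * Real.exp (-|x| * τ)) : ℝ) : ℂ) * e x)
      (volume.prod (volume.restrict (Ioi 0))) :=
    (integrable_expAbsMixture_integrand hg).ofReal.mul_bdd (c := 1)
      (by fun_prop : Continuous fun p : ℝ × ℝ => e p.1).aestronglyMeasurable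
      (.of_forall fun p => (he p.1).le)
  have inner : ∀ τ ∈ Ioi (0:ℝ), ∫ x, ((g τ * (τ * Real.exp (-|x| * τ)) : ℝ) : ℂ) * e x
      = ((g τ * (2 * τ ^ 2 / (τ ^ 2 + ξ ^ 2)) : ℝ) : ℂ) := by
    intro τ hτ
    simp_rw [ofReal_mul, mul_assoc]
    rw [integral_const_mul, integral_const_mul, integral_exp_neg_abs_mul_cexp ξ hτ]
    push_cast
    ring
  calc ∫ x, (expAbsMixture g x : ℂ) * e x
      = ∫ x, ∫ τ in Ioi 0, ((g τ * (τ * Real.exp (-|x| * τ)) : ℝ) : ℂ) * e x := by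
        simp_rw [expAbsMixture, ← integral_complex_ofReal, integral_mul_const]
    _ = ∫ τ in Ioi 0, ∫ x, ((g τ * (τ * Real.exp (-|x| * τ)) : ℝ) : ℂ) * e x :=
        integral_integral_swap hFe
    _ = _ := by
        rw [setIntegral_congr_fun measurableSet_Ioi inner, integral_complex_ofReal]

end ExpAbsMixture

section ArctanIntegrals

-- At `b = 0` both sides vanish, since `τ / 0 = 0`.
lemma hasDerivAt_mul_arctan_div (b τ : ℝ) :
    HasDerivAt (fun τ => b * arctan (τ / b)) (b ^ 2 / (b ^ 2 + τ ^ 2)) τ := by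
  rcases eq_or_ne b 0 with rfl | hb
  · simpa using hasDerivAt_const τ (0 : ℝ)
  · have := ((hasDerivAt_id' τ).div_const b).arctan.const_mul b
    refine this.congr_deriv ?_
    field_simp

lemma tendsto_mul_arctan_div_atTop {b : ℝ} (hb : 0 ≤ b) :
    Tendsto (fun τ => b * arctan (τ / b)) atTop (𝓝 (b * (π / 2))) := by
  rcases hb.eq_or_lt with rfl | hb
  · simp
  · exact ((tendsto_nhds_of_tendsto_nhdsWithin tendsto_arctan_atTop).comp
      (tendsto_id.atTop_div_const hb)).const_mul b

lemma integral_Ioi_sq_div_sq_add_mul_sq_add_self {a : ℝ} (ha : 0 < a) :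
    ∫ τ in Ioi 0, τ ^ 2 / ((a ^ 2 + τ ^ 2) * (a ^ 2 + τ ^ 2)) = π / (2 * (a + a)) := by
  have hderiv : ∀ τ ∈ Ici (0:ℝ),
      HasDerivAt (fun τ => (a * arctan (τ / a) - a ^ 2 * τ / (a ^ 2 + τ ^ 2)) / (2 * a ^ 2))
        (τ ^ 2 / ((a ^ 2 + τ ^ 2) * (a ^ 2 + τ ^ 2))) τ := by
    intro τ _
    have hq : a ^ 2 + τ ^ 2 ≠ 0 := by positivity
    have hquot := ((hasDerivAt_id' τ).const_mul (a ^ 2)).div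
      ((hasDerivAt_pow 2 τ).const_add (a ^ 2)) hq
    refine (((hasDerivAt_mul_arctan_div a τ).sub hquot).div_const (2 * a ^ 2)).congr_deriv ?_
    field_simp
    ring
  have hlim : Tendsto (fun τ => a ^ 2 * τ / (a ^ 2 + τ ^ 2)) atTop (𝓝 0) := by
    refine squeeze_zero' ?_ ?_ (by simpa using tendsto_inv_atTop_zero.const_mul (a ^ 2))
    · filter_upwards [eventually_ge_atTop 0] with τ hτ
      positivity
    · filter_upwards [eventually_gt_atTop 0] with τ hτ
      calc a ^ 2 * τ / (a ^ 2 + τ ^ 2) ≤ a ^ 2 * τ / τ ^ 2 := by gcongr; nlinarith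
        _ = a ^ 2 * τ⁻¹ := by field_simp
  rw [integral_Ioi_of_hasDerivAt_of_nonneg' hderiv (fun τ _ => by positivity)
    (((tendsto_mul_arctan_div_atTop ha.le).sub hlim).div_const _)]
  simp only [zero_div, arctan_zero, mul_zero, sub_zero]
  field_simp
  ring

lemma integral_Ioi_sq_div_sq_add_mul_sq_add {a b : ℝ} (ha : 0 < a) (hb : 0 ≤ b) :
    ∫ τ in Ioi 0, τ ^ 2 / ((a ^ 2 + τ ^ 2) * (b ^ 2 + τ ^ 2)) = π / (2 * (a + b)) := by
  rcases eq_or_ne a b with rfl | hab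
  · exact integral_Ioi_sq_div_sq_add_mul_sq_add_self ha
  have hab2 : a ^ 2 - b ^ 2 ≠ 0 := by
    intro h
    have : (a - b) * (a + b) = 0 := by linear_combination h
    rcases mul_eq_zero.mp this with h | h
    · exact hab (by linarith)
    · linarith
  -- partial fractions: `τ² / ((a² + τ²)(b² + τ²)) = (a² / (a² + τ²) - b² / (b² + τ²)) / (a² - b²)`
  set F := fun τ => (a * arctan (τ / a) - b * arctan (τ / b)) / (a ^ 2 - b ^ 2)
  have hcont : Continuous F := by fun_prop
  have hderiv : ∀ τ ∈ Ioi (0:ℝ), HasDerivAt F (τ ^ 2 / ((a ^ 2 + τ ^ 2) * (b ^ 2 + τ ^ 2))) τ := by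
    intro τ (hτ : 0 < τ)
    refine (((hasDerivAt_mul_arctan_div a τ).sub
      (hasDerivAt_mul_arctan_div b τ)).div_const _).congr_deriv ?_
    have : b ^ 2 + τ ^ 2 ≠ 0 := by positivity
    field_simp
    ring
  rw [integral_Ioi_of_hasDerivAt_of_nonneg hcont.continuousWithinAt hderiv
    (fun τ _ => by positivity)
    (((tendsto_mul_arctan_div_atTop ha.le).sub (tendsto_mul_arctan_div_atTop hb)).div_const _)]
  have : a + b ≠ 0 := by positivity
  simp only [F, zero_div, arctan_zero, mul_zero, sub_zero]
  field_simp
  ring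

end ArctanIntegrals

section Kmu

variable {μ : ℝ}

lemma Kmu_eq_expAbsMixture (μ : ℝ) :
    Kmu μ = fun x => √(2 / π) * expAbsMixture (fun τ => (μ ^ 2 + τ ^ 2)⁻¹) x := by
  funext x
  simp_rw [Kmu, expAbsMixture, div_eq_inv_mul]

lemma integrableOn_inv_sq_add (hμ : μ ≠ 0) :
    IntegrableOn (fun τ => (μ ^ 2 + τ ^ 2)⁻¹) (Ioi 0) := by
  simpa [Real.rpow_zero, one_div] using integrableOn_rpow_div_sq_add hμ le_rfl zero_lt_one

lemma integrable_Kmu (hμ : μ ≠ 0) : Integrable (Kmu μ) := by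
  rw [Kmu_eq_expAbsMixture]
  exact (integrable_expAbsMixture (integrableOn_inv_sq_add hμ)).const_mul _

lemma Kmu_nonneg (μ x : ℝ) : 0 ≤ Kmu μ x :=
  mul_nonneg (Real.sqrt_nonneg _) <| setIntegral_nonneg measurableSet_Ioi fun τ (hτ : 0 < τ) => by
    positivity

lemma Kmu_even (μ : ℝ) : Function.Even (Kmu μ) := fun x => by
  simp only [Kmu, abs_neg]

lemma exists_Kmu_sq_le_rpow (hμ : μ ≠ 0) {a : ℝ} (ha0 : 0 < a) (ha1 : a ≤ 1) :
    ∃ C, ∀ x, 0 < x → Kmu μ x ^ 2 ≤ C * x ^ (-(2 * a)) := by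
  set I := ∫ τ in Ioi 0, τ ^ (1 - a) / (μ ^ 2 + τ ^ 2)
  refine ⟨(√(2 / π) * I) ^ 2, fun x hx => ?_⟩
  have hbound : Kmu μ x ≤ √(2 / π) * I * x ^ (-a) := by
    rw [mul_assoc, ← integral_mul_const]
    refine mul_le_mul_of_nonneg_left (integral_mono_of_nonneg ?_
      ((integrableOn_rpow_div_sq_add hμ (by linarith) (by linarith)).mul_const _) ?_)
      (Real.sqrt_nonneg _)
    · filter_upwards [ae_restrict_mem measurableSet_Ioi] with τ (hτ : 0 < τ)
      positivity
    · filter_upwards [ae_restrict_mem measurableSet_Ioi] with τ (hτ : 0 < τ)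
      have hexp : Real.exp (-|x| * τ) ≤ x ^ (-a) * τ ^ (-a) := by
        rw [abs_of_pos hx, neg_mul, ← Real.mul_rpow hx.le hτ.le]
        exact exp_neg_le_rpow_neg (by positivity) ha0.le ha1
      calc τ * Real.exp (-|x| * τ) / (μ ^ 2 + τ ^ 2)
          ≤ τ * (x ^ (-a) * τ ^ (-a)) / (μ ^ 2 + τ ^ 2) := by gcongr
        _ = τ ^ (1 - a) / (μ ^ 2 + τ ^ 2) * x ^ (-a) := by
          rw [sub_eq_add_neg, Real.rpow_add hτ, Real.rpow_one]
          ring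
  calc Kmu μ x ^ 2 ≤ (√(2 / π) * I * x ^ (-a)) ^ 2 := pow_le_pow_left₀ (Kmu_nonneg μ x) hbound 2
    _ = (√(2 / π) * I) ^ 2 * x ^ (-(2 * a)) := by
      rw [mul_pow, ← Real.rpow_natCast (x ^ (-a)), ← Real.rpow_mul hx.le]
      ring_nf

lemma memLp_two_Kmu (hμ : μ ≠ 0) : MemLp (Kmu μ) 2 := by
  have hmeas := (integrable_Kmu hμ).aestronglyMeasurable
  rw [memLp_two_iff_integrable_sq hmeas]
  refine Function.Even.integrable_of_integrableOn_Ioi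
    (fun x => congrArg (· ^ 2) (Kmu_even μ x)) ?_
  obtain ⟨C₀, hC₀⟩ := exists_Kmu_sq_le_rpow hμ (a := 1 / 4) (by norm_num) (by norm_num)
  obtain ⟨C₁, hC₁⟩ := exists_Kmu_sq_le_rpow hμ (a := 1) one_pos le_rfl
  rw [← Ioc_union_Ioi_eq_Ioi zero_le_one]
  refine IntegrableOn.union ?_ ?_
  · have hpow : IntegrableOn (fun x : ℝ => x ^ (-(2 * (1 / 4) : ℝ))) (Ioc 0 1) :=
      (intervalIntegral.intervalIntegrable_rpow' (by norm_num)).1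
    refine (hpow.const_mul C₀).mono' (hmeas.pow 2).restrict ?_
    filter_upwards [ae_restrict_mem measurableSet_Ioc] with x ⟨hx, _⟩
    rw [Real.norm_of_nonneg (sq_nonneg _)]
    exact hC₀ x hx
  · have hpow : IntegrableOn (fun x : ℝ => x ^ (-(2 * 1) : ℝ)) (Ioi 1) :=
      integrableOn_Ioi_rpow_of_lt (by norm_num) zero_lt_one
    refine (hpow.const_mul C₁).mono' (hmeas.pow 2).restrict ?_
    filter_upwards [ae_restrict_mem measurableSet_Ioi] with x (hx : 1 < x)
    rw [Real.norm_of_nonneg (sq_nonneg _)]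
    exact hC₁ x (by linarith)

lemma integral_Ioi_inv_sq_add_mul (hμ : 0 < μ) (ξ : ℝ) :
    ∫ τ in Ioi 0, (μ ^ 2 + τ ^ 2)⁻¹ * (2 * τ ^ 2 / (τ ^ 2 + ξ ^ 2)) = π / (μ + |ξ|) := by
  have hsplit : ∀ τ ∈ Ioi (0:ℝ), (μ ^ 2 + τ ^ 2)⁻¹ * (2 * τ ^ 2 / (τ ^ 2 + ξ ^ 2))
      = 2 * (τ ^ 2 / ((μ ^ 2 + τ ^ 2) * (|ξ| ^ 2 + τ ^ 2))) := fun τ _ => by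
    rw [sq_abs, add_comm (ξ ^ 2), div_mul_eq_div_div]
    ring
  rw [setIntegral_congr_fun measurableSet_Ioi hsplit, integral_const_mul,
    integral_Ioi_sq_div_sq_add_mul_sq_add hμ (abs_nonneg ξ)]
  have : μ + |ξ| ≠ 0 := by positivity
  field_simp

lemma fourierTr_Kmu (hμ : 0 < μ) (ξ : ℝ) :
    fourierTr (fun x => (Kmu μ x : ℂ)) ξ = 1 / ((|ξ| + μ : ℝ) : ℂ) := by
  have hsqrt : √(2 / π) * π = √(2 * π) := by
    rw [show 2 * π = 2 / π * π ^ 2 by field_simp, Real.sqrt_mul (by positivity),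
      Real.sqrt_sq pi_pos.le]
  simp_rw [fourierTr, Kmu_eq_expAbsMixture, Complex.ofReal_mul, mul_assoc, integral_const_mul,
    integral_expAbsMixture_mul_cexp (integrableOn_inv_sq_add hμ.ne') ξ,
    integral_Ioi_inv_sq_add_mul hμ ξ, ← hsqrt]
  have : μ + |ξ| ≠ 0 := by positivity
  push_cast
  field_simp
  ring

end Kmu

/-- For `μ > 0`, `K_μ ∈ L¹(ℝ) ∩ L²(ℝ)` and its Fourier transform satisfies
`K̂_μ(ξ) = 1/(|ξ|+μ)` for all `ξ ∈ ℝ`. -/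
theorem Kmu_mem_L1_L2_and_fourier (μ : ℝ) (hμ : 0 < μ) :
    Integrable (Kmu μ) volume ∧ MemLp (Kmu μ) 2 volume ∧
      ∀ ξ : ℝ, fourierTr (fun x => (Kmu μ x : ℂ)) ξ = ((1 : ℂ) / ((|ξ| + μ : ℝ) : ℂ)) :=
  ⟨integrable_Kmu hμ.ne', memLp_two_Kmu hμ.ne', fourierTr_Kmu hμ⟩
end

section
/- For every μ > 0 and every x > 0, the derivative of K_μ satisfies the two-sided bound √(2/π)·e^{−μx}/(2x) ≤ −K_μ′(x) ≤ √(2/π)/x. In particular, 0 < −K_μ′(x) for all x > 0. -/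
open MeasureTheory Set

/-! For `x > 0`, `K_μ` is `√(2/π)` times the Laplace transform of the weight `τ / (μ² + τ²)`, so
`−K_μ′(x)` is `√(2/π)` times the Laplace transform of `τ² / (μ² + τ²)`. This weight lies in `[0, 1]`
and is at least `1/2` for `τ ≥ μ`; comparing with `∫_0^∞ e^{−xτ} dτ = 1/x` and
`∫_μ^∞ e^{−xτ} dτ = e^{−μx}/x` gives the two bounds. -/

open Real

section LaplaceTransform

variable {g : ℝ → ℝ} {a c C D x : ℝ}

theorem integral_exp_neg_mul_Ioi_s8 (hx : 0 < x) :
    ∫ τ in Ioi a, exp (-x * τ) = exp (-x * a) / x := by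
  rw [integral_exp_mul_Ioi (neg_neg_of_pos hx), neg_div_neg_eq]

theorem integrableOn_Ioi_mul_exp_neg (hg : Continuous g) (hC : ∀ τ ∈ Ioi (0:ℝ), |g τ| ≤ C)
    (hx : 0 < x) : IntegrableOn (fun τ => g τ * exp (-x * τ)) (Ioi 0) :=
  (exp_neg_integrableOn_Ioi 0 hx).bdd_mul hg.aestronglyMeasurable
    ((ae_restrict_iff' measurableSet_Ioi).2 (ae_of_all _ hC))

theorem hasDerivAt_integral_Ioi_mul_exp_neg (hg : Continuous g)
    (hC : ∀ τ ∈ Ioi (0:ℝ), |g τ| ≤ C) (hD : ∀ τ ∈ Ioi (0:ℝ), |τ * g τ| ≤ D) (hx : 0 < x) :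
    HasDerivAt (fun y => ∫ τ in Ioi 0, g τ * exp (-y * τ))
      (-∫ τ in Ioi 0, τ * g τ * exp (-x * τ)) x := by
  have hbound : ∀ᵐ τ ∂volume.restrict (Ioi 0), ∀ y ∈ Metric.ball x (x / 2),
      ‖-(τ * g τ * exp (-y * τ))‖ ≤ D * exp (-(x / 2) * τ) := by
    filter_upwards [ae_restrict_mem measurableSet_Ioi] with τ hτ y hy
    have hy : x / 2 < y := by linarith [(abs_lt.1 (Metric.mem_ball.1 hy)).1]
    have hexp : exp (-y * τ) ≤ exp (-(x / 2) * τ) := exp_le_exp.2 (by nlinarith [mem_Ioi.1 hτ])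
    rw [norm_neg, norm_mul, norm_of_nonneg (exp_pos _).le]
    exact mul_le_mul (hD τ hτ) hexp (exp_pos _).le ((abs_nonneg _).trans (hD τ hτ))
  have hderiv : ∀ᵐ τ ∂volume.restrict (Ioi 0), ∀ y ∈ Metric.ball x (x / 2),
      HasDerivAt (fun y => g τ * exp (-y * τ)) (-(τ * g τ * exp (-y * τ))) y := by
    refine ae_of_all _ fun τ y _ => ?_
    have hlin : HasDerivAt (fun y : ℝ => -y * τ) (-τ) y := by
      simpa using (hasDerivAt_neg y).mul_const τ
    exact (hlin.exp.const_mul (g τ)).congr_deriv (by ring)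
  rw [← integral_neg]
  exact (hasDerivAt_integral_of_dominated_loc_of_deriv_le
    (F := fun y τ => g τ * exp (-y * τ)) (Metric.ball_mem_nhds x (half_pos hx))
    (.of_forall fun y => (hg.mul (by fun_prop)).aestronglyMeasurable)
    (integrableOn_Ioi_mul_exp_neg hg hC hx)
    ((continuous_id.mul hg).mul (by fun_prop)).neg.aestronglyMeasurable hbound
    ((exp_neg_integrableOn_Ioi 0 (half_pos hx)).const_mul D) hderiv).2

theorem integral_Ioi_mul_exp_neg_le (hg : IntegrableOn (fun τ => g τ * exp (-x * τ)) (Ioi 0))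
    (hle : ∀ τ ∈ Ioi (0:ℝ), g τ ≤ C) (hx : 0 < x) :
    ∫ τ in Ioi 0, g τ * exp (-x * τ) ≤ C / x :=
  calc ∫ τ in Ioi 0, g τ * exp (-x * τ)
      ≤ ∫ τ in Ioi 0, C * exp (-x * τ) :=
        setIntegral_mono_on hg ((exp_neg_integrableOn_Ioi 0 hx).const_mul C) measurableSet_Ioi
          fun τ hτ => mul_le_mul_of_nonneg_right (hle τ hτ) (exp_pos _).le
    _ = C / x := by rw [integral_const_mul, integral_exp_neg_mul_Ioi_s8 hx, mul_zero, exp_zero,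
        mul_one_div]

theorem le_integral_Ioi_mul_exp_neg (hg : IntegrableOn (fun τ => g τ * exp (-x * τ)) (Ioi 0))
    (hg_nonneg : ∀ τ ∈ Ioi (0:ℝ), 0 ≤ g τ) (ha : 0 ≤ a) (hge : ∀ τ ∈ Ioi a, c ≤ g τ)
    (hx : 0 < x) : c * exp (-x * a) / x ≤ ∫ τ in Ioi 0, g τ * exp (-x * τ) :=
  calc c * exp (-x * a) / x
      = ∫ τ in Ioi a, c * exp (-x * τ) := by
        rw [integral_const_mul, integral_exp_neg_mul_Ioi_s8 hx, mul_div_assoc]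
    _ ≤ ∫ τ in Ioi a, g τ * exp (-x * τ) :=
        setIntegral_mono_on ((exp_neg_integrableOn_Ioi a hx).const_mul c)
          (hg.mono_set (Ioi_subset_Ioi ha)) measurableSet_Ioi
          fun τ hτ => mul_le_mul_of_nonneg_right (hge τ hτ) (exp_pos _).le
    _ ≤ ∫ τ in Ioi 0, g τ * exp (-x * τ) := by
        refine setIntegral_mono_set hg ?_ (Ioi_subset_Ioi ha).eventuallyLE
        filter_upwards [ae_restrict_mem measurableSet_Ioi] with τ hτ
        exact mul_nonneg (hg_nonneg τ hτ) (exp_pos _).le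

end LaplaceTransform

section Weight

variable {μ τ : ℝ}

theorem continuous_div_sq_add_sq (hμ : μ ≠ 0) : Continuous fun τ : ℝ => τ / (μ ^ 2 + τ ^ 2) :=
  continuous_id.div (by fun_prop) fun τ => by positivity

theorem abs_div_sq_add_sq_le (hμ : 0 < μ) (τ : ℝ) : |τ / (μ ^ 2 + τ ^ 2)| ≤ 1 / (2 * μ) := by
  rw [abs_div, abs_of_pos (by positivity : 0 < μ ^ 2 + τ ^ 2),
    div_le_div_iff₀ (by positivity) (by positivity)]
  nlinarith [sq_nonneg (μ - |τ|), sq_abs τ]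

theorem abs_mul_div_sq_add_sq_le_one (μ τ : ℝ) : |τ * (τ / (μ ^ 2 + τ ^ 2))| ≤ 1 := by
  rw [mul_div_assoc', ← sq, abs_of_nonneg (by positivity)]
  exact div_le_one_of_le₀ (by nlinarith [sq_nonneg μ]) (by positivity)

theorem one_half_le_mul_div_sq_add_sq (hμ : 0 < μ) (hτ : μ ≤ τ) :
    1 / 2 ≤ τ * (τ / (μ ^ 2 + τ ^ 2)) := by
  rw [mul_div_assoc', ← sq, div_le_div_iff₀ two_pos (by positivity)]
  nlinarith [pow_le_pow_left₀ hμ.le hτ 2]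

end Weight

theorem Kmu_eq_integral_mul_exp_neg (μ : ℝ) {y : ℝ} (hy : 0 < y) :
    Kmu μ y = √(2 / π) * ∫ τ in Ioi 0, τ / (μ ^ 2 + τ ^ 2) * exp (-y * τ) := by
  simp only [Kmu, abs_of_pos hy, div_mul_eq_mul_div]

theorem hasDerivAt_Kmu {μ x : ℝ} (hμ : 0 < μ) (hx : 0 < x) :
    HasDerivAt (Kmu μ)
      (-(√(2 / π) * ∫ τ in Ioi 0, τ * (τ / (μ ^ 2 + τ ^ 2)) * exp (-x * τ))) x := by
  rw [← mul_neg]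
  refine ((hasDerivAt_integral_Ioi_mul_exp_neg (continuous_div_sq_add_sq hμ.ne')
    (fun τ _ => abs_div_sq_add_sq_le hμ τ) (fun τ _ => abs_mul_div_sq_add_sq_le_one μ τ)
    hx).const_mul _).congr_of_eventuallyEq ?_
  filter_upwards [Ioi_mem_nhds hx] with y hy
  exact Kmu_eq_integral_mul_exp_neg μ hy

/-- For every `μ > 0` and `x > 0`, the derivative of `K_μ` satisfies
`√(2/π)·e^{−μx}/(2x) ≤ −K_μ′(x) ≤ √(2/π)/x`; in particular `0 < −K_μ′(x)`. -/
theorem Kmu_deriv_bounds (μ : ℝ) (hμ : 0 < μ) (x : ℝ) (hx : 0 < x) :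
    (Real.sqrt (2 / Real.pi) * Real.exp (-μ * x) / (2 * x) ≤ -(deriv (Kmu μ) x) ∧
      -(deriv (Kmu μ) x) ≤ Real.sqrt (2 / Real.pi) / x) ∧
    0 < -(deriv (Kmu μ) x) := by
  set J := ∫ τ in Ioi 0, τ * (τ / (μ ^ 2 + τ ^ 2)) * exp (-x * τ)
  have hderiv : -deriv (Kmu μ) x = √(2 / π) * J := by rw [(hasDerivAt_Kmu hμ hx).deriv, neg_neg]
  have hJ_int : IntegrableOn (fun τ => τ * (τ / (μ ^ 2 + τ ^ 2)) * exp (-x * τ)) (Ioi 0) :=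
    integrableOn_Ioi_mul_exp_neg (continuous_id.mul (continuous_div_sq_add_sq hμ.ne'))
      (fun τ _ => abs_mul_div_sq_add_sq_le_one μ τ) hx
  have hupper : J ≤ 1 / x := integral_Ioi_mul_exp_neg_le hJ_int
    (fun τ _ => (le_abs_self _).trans (abs_mul_div_sq_add_sq_le_one μ τ)) hx
  have hlower : 1 / 2 * exp (-x * μ) / x ≤ J := le_integral_Ioi_mul_exp_neg hJ_int
    (fun τ hτ => by have := mem_Ioi.1 hτ; positivity) hμ.le
    (fun τ hτ => one_half_le_mul_div_sq_add_sq hμ (mem_Ioi.1 hτ).le) hx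
  have hc : 0 < √(2 / π) := by positivity
  have hL : √(2 / π) * exp (-μ * x) / (2 * x) ≤ -deriv (Kmu μ) x := by
    rw [hderiv]
    calc √(2 / π) * exp (-μ * x) / (2 * x) = √(2 / π) * (1 / 2 * exp (-x * μ) / x) := by
          ring_nf
      _ ≤ √(2 / π) * J := mul_le_mul_of_nonneg_left hlower hc.le
  refine ⟨⟨hL, ?_⟩, lt_of_lt_of_le (by positivity) hL⟩
  rw [hderiv]
  exact (mul_le_mul_of_nonneg_left hupper hc.le).trans_eq (mul_one_div _ _)
end

section
/- For every μ > 0, lim_{x→0⁺} K_μ(x)/log(1/x) = √(2/π); in particular K_μ(x) → +∞ as x → 0⁺. -/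
/-!
With `g(τ) = τ/(μ²+τ²)` we have `K_μ(x) = √(2/π) ∫_0^∞ g(τ) e^{-xτ} dτ` for `x > 0`. Split the
integral at `1/x`. Below `1/x`, `1 - xτ ≤ e^{-xτ} ≤ 1` and `τ g(τ) ≤ 1`, so replacing `e^{-xτ}`
by `1` costs at most `x · (1/x) = 1`. Beyond `1/x`, `g(τ) ≤ 1/τ ≤ x`, so the tail is at most
`∫ x e^{-xτ} = e^{-1}`. Finally `∫_0^{1/x} g = ½ log(1 + (μx)⁻²) = log(1/x) + O(1)`, hence
`K_μ(x) = √(2/π) (log(1/x) + O(1))`.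
-/

open MeasureTheory Set Filter

open Real Asymptotics Topology

theorem Asymptotics.isEquivalent_of_sub_isBigO_one {α E : Type*} [NormedAddCommGroup E]
    {l : Filter α} {u v : α → E} (h : (u - v) =O[l] fun _ => (1 : ℝ))
    (hv : Tendsto (fun x => ‖v x‖) l atTop) : u ~[l] v :=
  h.trans_isLittleO ((isLittleO_one_left_iff ℝ).2 hv)

theorem continuous_id_div_sq_add_sq {c : ℝ} (hc : c ≠ 0) :
    Continuous fun τ : ℝ => τ / (c ^ 2 + τ ^ 2) :=
  continuous_id.div (by fun_prop) fun τ => by positivity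

theorem integral_id_div_sq_add_sq {c : ℝ} (hc : c ≠ 0) (a b : ℝ) :
    ∫ τ in a..b, τ / (c ^ 2 + τ ^ 2) = (log (c ^ 2 + b ^ 2) - log (c ^ 2 + a ^ 2)) / 2 := by
  have hderiv (τ : ℝ) : HasDerivAt (fun τ => log (c ^ 2 + τ ^ 2) / 2) (τ / (c ^ 2 + τ ^ 2)) τ := by
    refine ((((hasDerivAt_pow 2 τ).const_add (c ^ 2)).log ?_).div_const 2).congr_deriv ?_
    · positivity
    · field_simp
      ring
  rw [intervalIntegral.integral_eq_sub_of_hasDerivAt (fun τ _ => hderiv τ)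
    ((continuous_id_div_sq_add_sq hc).intervalIntegrable a b)]
  ring

noncomputable def KmuIntegral (μ x : ℝ) : ℝ :=
  ∫ τ in Ioi (0:ℝ), τ * exp (-x * τ) / (μ ^ 2 + τ ^ 2)

theorem Kmu_eq_mul_KmuIntegral (μ x : ℝ) : Kmu μ x = √(2 / π) * KmuIntegral μ |x| := rfl

section Integrand

variable {μ x τ : ℝ}

theorem div_sq_add_sq_sub_le_mul_exp_div (hx : 0 ≤ x) (hτ : 0 ≤ τ) :
    τ / (μ ^ 2 + τ ^ 2) - x ≤ τ * exp (-x * τ) / (μ ^ 2 + τ ^ 2) := by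
  have hτg : τ * (τ / (μ ^ 2 + τ ^ 2)) ≤ 1 := by
    rw [← mul_div_assoc, ← sq]
    exact div_le_one_of_le₀ (by nlinarith) (by positivity)
  calc τ / (μ ^ 2 + τ ^ 2) - x ≤ (1 - x * τ) * (τ / (μ ^ 2 + τ ^ 2)) := by nlinarith
    _ ≤ exp (-x * τ) * (τ / (μ ^ 2 + τ ^ 2)) := by
      gcongr
      linarith [add_one_le_exp (-x * τ)]
    _ = τ * exp (-x * τ) / (μ ^ 2 + τ ^ 2) := by ring

theorem mul_exp_div_le_div_sq_add_sq (hx : 0 ≤ x) (hτ : 0 ≤ τ) :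
    τ * exp (-x * τ) / (μ ^ 2 + τ ^ 2) ≤ τ / (μ ^ 2 + τ ^ 2) := by
  gcongr
  exact mul_le_of_le_one_right hτ (exp_le_one_iff.2 (by nlinarith))

theorem mul_exp_div_le_mul_exp (hx : 0 < x) (hτ : x⁻¹ ≤ τ) :
    τ * exp (-x * τ) / (μ ^ 2 + τ ^ 2) ≤ x * exp (-x * τ) := by
  have hτ0 : 0 < τ := (inv_pos.2 hx).trans_le hτ
  have hxτ : 1 ≤ x * τ := by rwa [inv_le_iff_one_le_mul₀' hx] at hτ
  have he := exp_pos (-x * τ)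
  rw [div_le_iff₀ (by positivity)]
  calc τ * exp (-x * τ) ≤ (x * τ) * (τ * exp (-x * τ)) := le_mul_of_one_le_left (by positivity) hxτ
    _ ≤ x * exp (-x * τ) * (μ ^ 2 + τ ^ 2) := by
      nlinarith [mul_nonneg (mul_nonneg hx.le he.le) (sq_nonneg μ)]

theorem integrableOn_Ioi_inv_mul_exp_div (hx : 0 < x) :
    IntegrableOn (fun τ => τ * exp (-x * τ) / (μ ^ 2 + τ ^ 2)) (Ioi x⁻¹) := by
  refine ((integrableOn_exp_mul_Ioi (neg_neg_of_pos hx) x⁻¹).const_mul x).mono'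
    (Measurable.aestronglyMeasurable (by fun_prop)) ?_
  filter_upwards [ae_restrict_mem measurableSet_Ioi] with τ hτ
  have hτ0 : 0 < τ := (inv_pos.2 hx).trans hτ
  rw [norm_of_nonneg (by positivity)]
  exact mul_exp_div_le_mul_exp hx hτ.le

theorem setIntegral_Ioi_inv_mul_exp_div_le (hx : 0 < x) :
    ∫ τ in Ioi x⁻¹, τ * exp (-x * τ) / (μ ^ 2 + τ ^ 2) ≤ exp (-1) := by
  calc ∫ τ in Ioi x⁻¹, τ * exp (-x * τ) / (μ ^ 2 + τ ^ 2)
      ≤ ∫ τ in Ioi x⁻¹, x * exp (-x * τ) :=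
        setIntegral_mono_on (integrableOn_Ioi_inv_mul_exp_div hx)
          ((integrableOn_exp_mul_Ioi (neg_neg_of_pos hx) x⁻¹).const_mul x) measurableSet_Ioi
          fun τ hτ => mul_exp_div_le_mul_exp hx hτ.le
    _ = exp (-1) := by
      rw [integral_const_mul, integral_exp_mul_Ioi (neg_neg_of_pos hx)]
      field_simp

end Integrand

theorem abs_KmuIntegral_sub_integral_le {μ x : ℝ} (hμ : μ ≠ 0) (hx : 0 < x) :
    |KmuIntegral μ x - ∫ τ in 0..x⁻¹, τ / (μ ^ 2 + τ ^ 2)| ≤ 1 := by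
  set f := fun τ => τ * exp (-x * τ) / (μ ^ 2 + τ ^ 2)
  have hf : Continuous f :=
    continuous_id.mul (by fun_prop) |>.div (by fun_prop) fun τ => by positivity
  have hsplit : KmuIntegral μ x = (∫ τ in 0..x⁻¹, f τ) + ∫ τ in Ioi x⁻¹, f τ :=
    (intervalIntegral.integral_interval_add_Ioi' (hf.intervalIntegrable (μ := volume) _ _)
      (integrableOn_Ioi_inv_mul_exp_div hx)).symm
  have hg := (continuous_id_div_sq_add_sq hμ).intervalIntegrable (μ := volume) 0 x⁻¹
  have hlower : (∫ τ in 0..x⁻¹, τ / (μ ^ 2 + τ ^ 2)) - 1 ≤ ∫ τ in 0..x⁻¹, f τ := by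
    have := intervalIntegral.integral_mono_on (inv_pos.2 hx).le (hg.sub intervalIntegrable_const)
      (hf.intervalIntegrable _ _) fun τ hτ => div_sq_add_sq_sub_le_mul_exp_div hx.le hτ.1
    rwa [intervalIntegral.integral_sub hg intervalIntegrable_const, intervalIntegral.integral_const,
      sub_zero, smul_eq_mul, inv_mul_cancel₀ hx.ne'] at this
  have hupper : ∫ τ in 0..x⁻¹, f τ ≤ ∫ τ in 0..x⁻¹, τ / (μ ^ 2 + τ ^ 2) :=
    intervalIntegral.integral_mono_on (inv_pos.2 hx).le (hf.intervalIntegrable _ _) hg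
      fun τ hτ => mul_exp_div_le_div_sq_add_sq hx.le hτ.1
  have htail_nonneg : 0 ≤ ∫ τ in Ioi x⁻¹, f τ :=
    setIntegral_nonneg measurableSet_Ioi fun τ hτ =>
      have : 0 < τ := (inv_pos.2 hx).trans hτ
      by positivity
  have htail_le := setIntegral_Ioi_inv_mul_exp_div_le (μ := μ) hx
  have he : exp (-1) ≤ 1 := exp_le_one_iff.2 (by norm_num)
  rw [abs_sub_le_iff, hsplit]
  constructor <;> linarith

theorem KmuIntegral_sub_log_isBigO_one {μ : ℝ} (hμ : μ ≠ 0) :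
    (fun x => KmuIntegral μ x - log x⁻¹) =O[𝓝[>] 0] fun _ => (1 : ℝ) := by
  set A := fun x : ℝ => ∫ τ in 0..x⁻¹, τ / (μ ^ 2 + τ ^ 2)
  have hIA : (fun x => KmuIntegral μ x - A x) =O[𝓝[>] 0] fun _ => (1 : ℝ) :=
    IsBigO.of_bound 1 <| eventually_mem_nhdsWithin.mono fun x hx => by
      simpa only [Real.norm_eq_abs, norm_one, mul_one] using
        abs_KmuIntegral_sub_integral_le hμ hx
  have hA_eq : ∀ x ≠ 0, A x - log x⁻¹ = (log (μ ^ 2 * x ^ 2 + 1) - log (μ ^ 2)) / 2 := by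
    intro x hx
    simp only [A, integral_id_div_sq_add_sq hμ, zero_pow two_ne_zero, add_zero]
    rw [show μ ^ 2 + x⁻¹ ^ 2 = (μ ^ 2 * x ^ 2 + 1) * x⁻¹ ^ 2 by field_simp,
      log_mul (by positivity) (by positivity), log_pow]
    push_cast
    ring
  have hA : Tendsto (fun x => A x - log x⁻¹) (𝓝[>] 0) (𝓝 (-log (μ ^ 2) / 2)) := by
    have hcont : Continuous fun x : ℝ => (log (μ ^ 2 * x ^ 2 + 1) - log (μ ^ 2)) / 2 :=
      ((continuous_const.mul (continuous_pow 2)).add continuous_const).log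
        (fun x => (by positivity : μ ^ 2 * x ^ 2 + 1 ≠ 0)) |>.sub continuous_const |>.div_const 2
    refine (tendsto_nhdsWithin_of_tendsto_nhds (hcont.tendsto' 0 _ (by simp))).congr' ?_
    exact eventually_mem_nhdsWithin.mono fun x hx => (hA_eq x (ne_of_gt hx)).symm
  exact (hIA.add (hA.isBigO_one ℝ)).congr_left fun x => by ring

/-- For every `μ > 0`, `lim_{x→0⁺} K_μ(x)/log(1/x) = √(2/π)`;
in particular `K_μ(x) → +∞` as `x → 0⁺`. -/
theorem Kmu_log_asymptotics_at_zero (μ : ℝ) (hμ : 0 < μ) :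
    Tendsto (fun x : ℝ => Kmu μ x / Real.log (1 / x))
      (nhdsWithin 0 (Ioi 0)) (nhds (Real.sqrt (2 / Real.pi))) ∧
    Tendsto (Kmu μ) (nhdsWithin 0 (Ioi 0)) atTop := by
  have hL : Tendsto (fun x : ℝ => log x⁻¹) (𝓝[>] 0) atTop := by
    simpa only [Function.comp_def, log_inv] using
      tendsto_neg_atBot_atTop.comp tendsto_log_nhdsGT_zero
  have hI : KmuIntegral μ ~[𝓝[>] 0] fun x => log x⁻¹ :=
    isEquivalent_of_sub_isBigO_one (KmuIntegral_sub_log_isBigO_one hμ.ne')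
      (tendsto_norm_atTop_atTop.comp hL)
  have hK : (fun x => √(2 / π) * KmuIntegral μ x) =ᶠ[𝓝[>] 0] Kmu μ :=
    eventually_mem_nhdsWithin.mono fun x hx => by
      rw [Kmu_eq_mul_KmuIntegral, abs_of_pos (mem_Ioi.1 hx)]
  constructor
  · have hratio := (isEquivalent_iff_tendsto_one
      (hL.eventually_gt_atTop 0 |>.mono fun _ => ne_of_gt)).1 hI
    refine (mul_one √(2 / π) ▸ hratio.const_mul √(2 / π)).congr' (hK.mono fun x hx => ?_)
    simp only [← hx, Pi.div_apply, one_div, mul_div_assoc]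
  · exact ((hI.symm.tendsto_atTop hL).const_mul_atTop (by positivity)).congr' hK
end
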